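/- arXiv:0908.0029 — 2 statements merged into one kernel-verified Lean document; each statement's English description precedes it below -/
import Mathlib

section
/- If M = [[S, V],[T, U]] is a symplectic 2n×2n real matrix written in n×n blocks, then the complex matrix U + iV is invertible. -/
open Matrix

/-- The standard symplectic matrix `J = [[0, -I],[I, 0]]` in `n × n` block form. -/
def Jmat (n : ℕ) : Matrix (Fin n ⊕ Fin n) (Fin n ⊕ Fin n) ℝ :=
  Matrix.fromBlocks 0 (-1) 1 0

theorem stmt_1 (n : ℕ) (S V T U : Matrix (Fin n) (Fin n) ℝ)
    (h : (Matrix.fromBlocks S V T U)ᵀ * Jmat n * Matrix.fromBlocks S V T U = Jmat n) :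
    IsUnit (U.map (fun x => (x : ℂ)) + Complex.I • V.map (fun x => (x : ℂ))) := by
  set M := Matrix.fromBlocks S V T U with hM
  -- M is injective (has left inverse -J * Mᵀ * J)
  have hJJ : Jmat n * Jmat n = -1 := by
    simp [Jmat, Matrix.fromBlocks_multiply, Matrix.fromBlocks_neg, ← Matrix.fromBlocks_one]
  have hleft : (-(Jmat n) * Mᵀ * Jmat n) * M = 1 := by
    have : -(Jmat n) * (Mᵀ * Jmat n * M) = -(Jmat n) * Jmat n := by rw [h]
    calc (-(Jmat n) * Mᵀ * Jmat n) * M = -(Jmat n) * (Mᵀ * Jmat n * M) := by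
          simp only [Matrix.mul_assoc]
    _ = -(Jmat n) * Jmat n := by rw [h]
    _ = 1 := by rw [neg_mul, hJJ, neg_neg]
  have hMinj : ∀ x : Fin n ⊕ Fin n → ℝ, M *ᵥ x = 0 → x = 0 := by
    intro x hx
    have : (-(Jmat n) * Mᵀ * Jmat n) *ᵥ (M *ᵥ x) = x := by
      rw [Matrix.mulVec_mulVec, hleft, Matrix.one_mulVec]
    rw [hx, Matrix.mulVec_zero] at this
    exact this.symm
  by_contra hW
  rw [Matrix.isUnit_iff_isUnit_det, isUnit_iff_ne_zero, not_not] at hW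
  obtain ⟨z, hz0, hz⟩ := Matrix.exists_mulVec_eq_zero_iff.mpr hW
  set a : Fin n → ℝ := fun k => (z k).re with ha
  set b : Fin n → ℝ → ℝ := fun k => id with hb'
  clear hb'
  -- real and imaginary parts of the kernel equation
  have key : ∀ j, (U *ᵥ a - V *ᵥ (fun k => (z k).im)) j = 0 ∧
      (U *ᵥ (fun k => (z k).im) + V *ᵥ a) j = 0 := by
    intro j
    have e := congrFun hz j
    simp only [Matrix.mulVec, dotProduct, Matrix.add_apply, Matrix.smul_apply,
      Matrix.map_apply, smul_eq_mul, Pi.zero_apply] at e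
    constructor
    · have := congrArg Complex.re e
      simp only [Complex.re_sum, Complex.add_re, Complex.add_im, Complex.mul_re,
        Complex.ofReal_re, Complex.ofReal_im, Complex.I_re, Complex.I_im, Complex.mul_im,
        Complex.zero_re] at this
      simp only [Pi.sub_apply, Matrix.mulVec, dotProduct, Pi.zero_apply, ha]
      rw [← Finset.sum_sub_distrib]
      rw [← this]
      apply Finset.sum_congr rfl
      intro k _
      simp [Complex.add_re, Complex.add_im, Complex.mul_re, Complex.mul_im]
    · have := congrArg Complex.im e
      simp only [Complex.im_sum, Complex.add_re, Complex.add_im, Complex.mul_re,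
        Complex.ofReal_re, Complex.ofReal_im, Complex.I_re, Complex.I_im, Complex.mul_im,
        Complex.zero_im] at this
      simp only [Pi.add_apply, Matrix.mulVec, dotProduct, Pi.zero_apply, ha]
      rw [← Finset.sum_add_distrib]
      rw [← this]
      apply Finset.sum_congr rfl
      intro k _
      simp [Complex.add_re, Complex.add_im, Complex.mul_re, Complex.mul_im]
  set bb : Fin n → ℝ := fun k => (z k).im with hbb
  have h1 : V *ᵥ bb = U *ᵥ a := by
    funext j
    have := (key j).1
    simp only [Pi.sub_apply] at this
    linarith
  have h2 : U *ᵥ bb = -(V *ᵥ a) := by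
    funext j
    have := (key j).2
    simp only [Pi.add_apply, Pi.neg_apply] at this ⊢
    linarith
  -- symplectic form computation
  have hform : (M *ᵥ Sum.elim 0 a) ⬝ᵥ (Jmat n *ᵥ (M *ᵥ Sum.elim 0 bb)) =
      (Sum.elim 0 a : Fin n ⊕ Fin n → ℝ) ⬝ᵥ (Jmat n *ᵥ Sum.elim 0 bb) := by
    rw [Matrix.mulVec_mulVec, Matrix.dotProduct_mulVec, Matrix.vecMul_mulVec,
      ← Matrix.mul_assoc, h, ← Matrix.dotProduct_mulVec]
  have hMa : M *ᵥ Sum.elim 0 a = Sum.elim (V *ᵥ a) (U *ᵥ a) := by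
    rw [hM, Matrix.fromBlocks_mulVec]
    simp [Sum.elim_comp_inl, Sum.elim_comp_inr]
  have hMb : M *ᵥ Sum.elim 0 bb = Sum.elim (V *ᵥ bb) (U *ᵥ bb) := by
    rw [hM, Matrix.fromBlocks_mulVec]
    simp [Sum.elim_comp_inl, Sum.elim_comp_inr]
  have hJb : ∀ u v : Fin n → ℝ, Jmat n *ᵥ Sum.elim u v = Sum.elim (-v) u := by
    intro u v
    rw [Jmat, Matrix.fromBlocks_mulVec]
    simp [Sum.elim_comp_inl, Sum.elim_comp_inr, Matrix.neg_mulVec, Matrix.one_mulVec]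
  have hzero : (V *ᵥ a) ⬝ᵥ (V *ᵥ a) + (U *ᵥ a) ⬝ᵥ (U *ᵥ a) = 0 := by
    have := hform
    rw [hMa, hMb, hJb, hJb, h1, h2, neg_neg] at this
    simp only [sumElim_dotProduct_sumElim, dotProduct_comm (V *ᵥ a),
      zero_dotProduct, dotProduct_neg, dotProduct_zero] at this
    linarith [this]
  have hVa : V *ᵥ a = 0 := by
    have h1' : (V *ᵥ a) ⬝ᵥ (V *ᵥ a) = 0 := by
      have n1 : (0:ℝ) ≤ (V *ᵥ a) ⬝ᵥ (V *ᵥ a) := Finset.sum_nonneg fun i _ => mul_self_nonneg _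
      have n2 : (0:ℝ) ≤ (U *ᵥ a) ⬝ᵥ (U *ᵥ a) := Finset.sum_nonneg fun i _ => mul_self_nonneg _
      linarith
    exact dotProduct_self_eq_zero.mp h1'
  have hUa : U *ᵥ a = 0 := by
    have h1' : (U *ᵥ a) ⬝ᵥ (U *ᵥ a) = 0 := by
      have n1 : (0:ℝ) ≤ (V *ᵥ a) ⬝ᵥ (V *ᵥ a) := Finset.sum_nonneg fun i _ => mul_self_nonneg _
      have n2 : (0:ℝ) ≤ (U *ᵥ a) ⬝ᵥ (U *ᵥ a) := Finset.sum_nonneg fun i _ => mul_self_nonneg _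
      linarith
    exact dotProduct_self_eq_zero.mp h1'
  have hVb : V *ᵥ bb = 0 := by rw [h1, hUa]
  have hUb : U *ᵥ bb = 0 := by rw [h2, hVa, neg_zero]
  have haz : a = 0 := by
    have := hMinj (Sum.elim 0 a) (by rw [hMa, hVa, hUa]; ext (j|j) <;> simp)
    funext k
    have := congrFun this (Sum.inr k)
    simpa using this
  have hbz : bb = 0 := by
    have := hMinj (Sum.elim 0 bb) (by rw [hMb, hVb, hUb]; ext (j|j) <;> simp)
    funext k
    have := congrFun this (Sum.inr k)
    simpa using this
  apply hz0
  funext k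
  have h1 : (z k).re = 0 := congrFun haz k
  have h2 : (z k).im = 0 := congrFun hbz k
  exact Complex.ext (by simpa using h1) (by simpa using h2)
end

section
/- If M = [[S, V],[T, U]] is a symplectic 2n×2n real matrix written in n×n blocks, then the complex matrix Q = (U - iV)(U + iV)^{-1} is unitary. -/
open Matrix

theorem stmt_2 (n : ℕ) (S V T U : Matrix (Fin n) (Fin n) ℝ)
    (h : (Matrix.fromBlocks S V T U)ᵀ * Jmat n * Matrix.fromBlocks S V T U = Jmat n)
    (Q : Matrix (Fin n) (Fin n) ℂ)
    (hQ : Q = (U.map (fun x => (x : ℂ)) - Complex.I • V.map (fun x => (x : ℂ))) *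
      (U.map (fun x => (x : ℂ)) + Complex.I • V.map (fun x => (x : ℂ)))⁻¹) :
    Qᴴ * Q = 1 := by
  classical
  rw [Jmat, fromBlocks_transpose, fromBlocks_multiply, fromBlocks_multiply,
    fromBlocks_inj] at h
  obtain ⟨h11, h12, h21, h22⟩ := h
  simp only [Matrix.mul_zero, Matrix.mul_one, Matrix.mul_neg, Matrix.zero_mul,
    Matrix.neg_mul, zero_add, add_zero, Matrix.one_mul, ← sub_eq_add_neg] at h21 h22
  -- h21 : Uᵀ * S - Vᵀ * T = 1,  h22 : Uᵀ * V - Vᵀ * U = 0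
  have hUV : Uᵀ * V = Vᵀ * U := sub_eq_zero.mp h22
  have hSU : Sᵀ * U - Tᵀ * V = 1 := by
    have := congrArg Matrix.transpose h21
    simpa [transpose_sub, transpose_mul, transpose_transpose] using this
  -- the real Gram matrix is invertible
  set G : Matrix (Fin n) (Fin n) ℝ := Uᵀ * U + Vᵀ * V with hG
  have hGker : ∀ x : Fin n → ℝ, G *ᵥ x = 0 → x = 0 := by
    intro x hx
    have key : (U *ᵥ x) ⬝ᵥ (U *ᵥ x) + (V *ᵥ x) ⬝ᵥ (V *ᵥ x) = 0 := by
      have := congrArg (fun v => x ⬝ᵥ v) hx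
      simpa [hG, add_mulVec, ← mulVec_mulVec, dotProduct_mulVec, vecMul_transpose,
        dotProduct_add] using this
    have hU0 : U *ᵥ x = 0 := by
      rw [← dotProduct_self_eq_zero]
      have h1 : (0:ℝ) ≤ (U *ᵥ x) ⬝ᵥ (U *ᵥ x) := Finset.sum_nonneg fun i _ => mul_self_nonneg _
      have h2 : (0:ℝ) ≤ (V *ᵥ x) ⬝ᵥ (V *ᵥ x) := Finset.sum_nonneg fun i _ => mul_self_nonneg _
      linarith
    have hV0 : V *ᵥ x = 0 := by
      rw [← dotProduct_self_eq_zero]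
      have h1 : (0:ℝ) ≤ (U *ᵥ x) ⬝ᵥ (U *ᵥ x) := Finset.sum_nonneg fun i _ => mul_self_nonneg _
      have h2 : (0:ℝ) ≤ (V *ᵥ x) ⬝ᵥ (V *ᵥ x) := Finset.sum_nonneg fun i _ => mul_self_nonneg _
      linarith
    calc x = (Sᵀ * U - Tᵀ * V) *ᵥ x := by rw [hSU, Matrix.one_mulVec]
    _ = Sᵀ *ᵥ (U *ᵥ x) - Tᵀ *ᵥ (V *ᵥ x) := by rw [sub_mulVec, mulVec_mulVec, mulVec_mulVec]
    _ = 0 := by rw [hU0, hV0, mulVec_zero, mulVec_zero, sub_zero]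
  have hGunit : IsUnit G := by
    rw [← Matrix.mulVec_injective_iff_isUnit]
    intro x y hxy
    have : G *ᵥ (x - y) = 0 := by rw [mulVec_sub, hxy, sub_self]
    have := hGker _ this
    exact sub_eq_zero.mp this
  -- pass to ℂ
  set f : Matrix (Fin n) (Fin n) ℝ →+* Matrix (Fin n) (Fin n) ℂ :=
    (algebraMap ℝ ℂ).mapMatrix with hf
  have hfU : U.map (fun x => (x : ℂ)) = f U := rfl
  have hfV : V.map (fun x => (x : ℂ)) = f V := rfl
  set U' := f U with hU'
  set V' := f V with hV'
  have hcU : U'ᴴ = (f U)ᵀ := by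
    ext i j
    simp [hU', hf, conjTranspose_apply, RingHom.mapMatrix_apply, Matrix.map_apply]
  have hcV : V'ᴴ = (f V)ᵀ := by
    ext i j
    simp [hV', hf, conjTranspose_apply, RingHom.mapMatrix_apply, Matrix.map_apply]
  have hft : ∀ X : Matrix (Fin n) (Fin n) ℝ, (f X)ᵀ = f Xᵀ := by
    intro X; ext i j; simp [hf, RingHom.mapMatrix_apply, Matrix.map_apply]
  have hUV' : (f U)ᵀ * V' = (f V)ᵀ * U' := by
    rw [hft, hft, hU', hV', ← _root_.map_mul f, ← _root_.map_mul f, hUV]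
  set A : Matrix (Fin n) (Fin n) ℂ := U' + Complex.I • V' with hA
  set B : Matrix (Fin n) (Fin n) ℂ := U' - Complex.I • V' with hB
  have hGram : Aᴴ * A = f G ∧ Bᴴ * B = f G := by
    have hAH : Aᴴ = (f U)ᵀ - Complex.I • (f V)ᵀ := by
      rw [hA, conjTranspose_add, conjTranspose_smul, hcU, hcV]
      simp [Complex.conj_I, neg_smul, sub_eq_add_neg]
    have hBH : Bᴴ = (f U)ᵀ + Complex.I • (f V)ᵀ := by
      rw [hB, conjTranspose_sub, conjTranspose_smul, hcU, hcV]
      simp [Complex.conj_I, neg_smul, sub_eq_add_neg]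
    have hII : (Complex.I * Complex.I : ℂ) = -1 := Complex.I_mul_I
    constructor
    · rw [hAH, hA, hG, map_add, _root_.map_mul f, _root_.map_mul f, ← hft, ← hft, hU', hV']
      rw [sub_mul, Matrix.mul_add, Matrix.mul_add, Matrix.smul_mul, Matrix.smul_mul,
        Matrix.mul_smul, Matrix.mul_smul, smul_smul, hII, hUV']
      simp [sub_eq_add_neg]
      abel
    · rw [hBH, hB, hG, map_add, _root_.map_mul f, _root_.map_mul f, ← hft, ← hft, hU', hV']
      rw [add_mul, Matrix.mul_sub, Matrix.mul_sub, Matrix.smul_mul, Matrix.smul_mul,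
        Matrix.mul_smul, Matrix.mul_smul, smul_smul, hII, hUV']
      simp [sub_eq_add_neg]
      abel
  have hfGunit : IsUnit (f G) := hGunit.map f
  have hAunit : IsUnit A := by
    have : IsUnit (Aᴴ * A).det := by
      rw [hGram.1]; exact (Matrix.isUnit_iff_isUnit_det _).mp hfGunit
    rw [det_mul] at this
    exact (Matrix.isUnit_iff_isUnit_det _).mpr (isUnit_of_mul_isUnit_right this)
  have hAHunit : IsUnit Aᴴ := by
    have : IsUnit A.det := (Matrix.isUnit_iff_isUnit_det _).mp hAunit
    rw [Matrix.isUnit_iff_isUnit_det, det_conjTranspose]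
    exact this.star
  -- conclude
  rw [hQ, hfU, hfV, ← hA, ← hB]
  rw [conjTranspose_mul, conjTranspose_nonsing_inv]
  calc (Aᴴ)⁻¹ * Bᴴ * (B * A⁻¹) = (Aᴴ)⁻¹ * (Bᴴ * B) * A⁻¹ := by
        rw [Matrix.mul_assoc, Matrix.mul_assoc, Matrix.mul_assoc]
  _ = (Aᴴ)⁻¹ * (Aᴴ * A) * A⁻¹ := by rw [hGram.2, ← hGram.1]
  _ = ((Aᴴ)⁻¹ * Aᴴ) * (A * A⁻¹) := by
        rw [Matrix.mul_assoc, Matrix.mul_assoc, Matrix.mul_assoc]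
  _ = 1 := by
        rw [Matrix.nonsing_inv_mul _ ((Matrix.isUnit_iff_isUnit_det _).mp hAHunit),
          Matrix.mul_nonsing_inv _ ((Matrix.isUnit_iff_isUnit_det _).mp hAunit),
          Matrix.one_mul]
end
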